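/- arXiv:2411.00523 — 5 statements merged into one kernel-verified Lean document; each statement's English description precedes it below -/
import Mathlib

section
/- Let A, B, n be integers with AB ≠ 0 and n ≥ 2, and let F_{n,A,B}(x) = x^{2^n} + A·x^{3·2^{n-2}} + B·x^{2^{n-1}} + A·x^{2^{n-2}} + 1. Then the discriminant of F_{n,A,B} equals 2^{2^n(n-2)} · ((B+2-2A)(B+2+2A)(A^2-4B+8)^2)^{2^{n-2}}. -/
open Polynomial

/-- The quintinomial `F_{n,A,B}(x)`. -/
noncomputable def Quint (n : ℕ) (A B : ℤ) : Polynomial ℤ :=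
  X ^ (2 ^ n) + C A * X ^ (3 * 2 ^ (n - 2)) + C B * X ^ (2 ^ (n - 1)) +
    C A * X ^ (2 ^ (n - 2)) + 1

/-- The discriminant of a monic polynomial over `ℚ`, computed in its splitting field:
`disc f = (-1)^(d(d-1)/2) ∏ f'(rᵢ)` over the roots `rᵢ` of `f`. -/
noncomputable def polyDisc (f : Polynomial ℚ) : f.SplittingField :=
  (-1) ^ (f.natDegree * (f.natDegree - 1) / 2) *
    ((f.map (algebraMap ℚ f.SplittingField)).roots.map
      (fun r => (derivative (f.map (algebraMap ℚ f.SplittingField))).eval r)).prod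

/-!
Write `m = 2^(n-2)` and `P = X⁴ + A X³ + B X² + A X + 1`, so that `F = P(X^m)`. At a root `r` of
`F` one has `F'(r) = m r^(m-1) P'(r^m)`; the roots of `F` multiply to `F(0) = 1`, and over each
root `y` of `P` lie exactly `m` roots `r` of `F` with `r^m = y`. Hence `∏ F'(r) = m^(4m) (∏ P'(y))^m`.
Since `P` is palindromic, its roots are `y, y⁻¹, z, z⁻¹`, where `u = y + y⁻¹` and `v = z + z⁻¹`
are the roots of `t² + A t + B - 2`. Then `∏ P'(yᵢ) = ∏_{i ≠ j} (yᵢ - yⱼ) = (u² - 4)(v² - 4)(u - v)⁴`,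
and `(u² - 4)(v² - 4) = W1 W2`, `(u - v)² = W3`. The sign is `+1` because `deg F = 4m`.
-/

namespace Polynomial

variable {K : Type*} [Field K] {m : ℕ}

theorem Splits.of_comp_X_pow (hm : m ≠ 0) {p : K[X]} (h : (p.comp (X ^ m)).Splits) :
    p.Splits := by
  induction hd : p.natDegree generalizing p with
  | zero => exact Splits.of_natDegree_eq_zero hd
  | succ d ih =>
    have hdeg : (p.comp (X ^ m)).degree ≠ 0 := degree_ne_of_natDegree_ne <| by
      rw [natDegree_comp, natDegree_X_pow, hd]; exact mul_ne_zero (by omega) hm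
    obtain ⟨r, hr⟩ := h.exists_eval_eq_zero hdeg
    have hroot : p.IsRoot (r ^ m) := by simpa [eval_comp] using hr
    have hq : (p /ₘ (X - C (r ^ m))).natDegree = d := by
      rw [natDegree_divByMonic _ (monic_X_sub_C _), hd, natDegree_X_sub_C]; rfl
    rw [← mul_divByMonic_eq_iff_isRoot.mpr hroot] at h ⊢
    rw [mul_comp, sub_comp, X_comp, C_comp] at h
    exact (Splits.X_sub_C _).mul <|
      ih ((splits_mul'.mp h).2.resolve_right (monic_X_pow_sub_C _ hm).ne_zero) hq

theorem prod_map_roots_comp_X_pow {M : Type*} [CommMonoid M] (hm : m ≠ 0) {p : K[X]}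
    (h : (p.comp (X ^ m)).Splits) (g : K → M) :
    ((p.comp (X ^ m)).roots.map fun r => g (r ^ m)).prod =
      (p.roots.map fun y => g y ^ m).prod := by
  rcases eq_or_ne p 0 with rfl | hp
  · simp
  have hfac : p.comp (X ^ m) = C p.leadingCoeff * (p.roots.map fun y => X ^ m - C y).prod := by
    conv_lhs => rw [(h.of_comp_X_pow hm).eq_prod_roots]
    simp [multiset_prod_comp, Multiset.map_map]
  have hne : p.comp (X ^ m) ≠ 0 := by
    simp [comp_eq_zero_iff, hp, Ne.symm hm]
  have hroots : (p.comp (X ^ m)).roots = p.roots.bind fun y => (X ^ m - C y).roots := by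
    rw [hfac, roots_C_mul _ (leadingCoeff_ne_zero.mpr hp), roots_multiset_prod, Multiset.bind_map]
    simp [(monic_X_pow_sub_C _ hm).ne_zero]
  rw [hroots, Multiset.map_bind, Multiset.prod_bind]
  refine congrArg _ (Multiset.map_congr rfl fun y hy => ?_)
  have hsplit : (X ^ m - C y).Splits := h.of_dvd hne <| hfac ▸
    (Multiset.dvd_prod (Multiset.mem_map_of_mem _ hy)).mul_left _
  have hpow : ∀ r ∈ (X ^ m - C y).roots, r ^ m = y := fun r hr => by
    simpa [sub_eq_zero] using (mem_roots (monic_X_pow_sub_C y hm).ne_zero).mp hr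
  rw [Multiset.map_congr rfl fun r hr => congrArg g (hpow r hr), Multiset.map_const',
    splits_iff_card_roots.mp hsplit, natDegree_X_pow_sub_C, Multiset.prod_replicate]

theorem prod_derivative_eval_roots_comp_X_pow (hm : m ≠ 0) {p : K[X]}
    (h : (p.comp (X ^ m)).Splits) :
    ((p.comp (X ^ m)).roots.map (derivative (p.comp (X ^ m))).eval).prod =
      (m : K) ^ (p.natDegree * m) * (p.comp (X ^ m)).roots.prod ^ (m - 1) *
        (p.roots.map (derivative p).eval).prod ^ m := by
  have hder : ∀ r, (derivative (p.comp (X ^ m))).eval r =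
      (m * r ^ (m - 1)) * (derivative p).eval (r ^ m) := fun r => by
    simp only [derivative_comp, derivative_X_pow, eval_mul, eval_comp, eval_C, eval_pow, eval_X]
  have hfibres := prod_map_roots_comp_X_pow hm h (derivative p).eval
  rw [Multiset.map_congr rfl fun r _ => hder r, Multiset.prod_map_mul, Multiset.prod_map_mul,
    Multiset.map_const', Multiset.prod_replicate, Multiset.prod_map_pow, Multiset.map_id',
    hfibres, Multiset.prod_map_pow, splits_iff_card_roots.mp h, natDegree_comp, natDegree_X_pow]

end Polynomial

section PalindromicQuartic

variable {R : Type*}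

noncomputable def palindromicQuartic [Semiring R] (a b : R) : R[X] :=
  X ^ 4 + C a * X ^ 3 + C b * X ^ 2 + C a * X + 1

theorem map_palindromicQuartic [Semiring R] {S : Type*} [Semiring S] (f : R →+* S) (a b : R) :
    (palindromicQuartic a b).map f = palindromicQuartic (f a) (f b) := by
  simp [palindromicQuartic]

theorem monic_palindromicQuartic [Semiring R] [Nontrivial R] (a b : R) :
    (palindromicQuartic a b).Monic := by
  unfold palindromicQuartic; monicity!

theorem natDegree_palindromicQuartic [Semiring R] [Nontrivial R] (a b : R) :
    (palindromicQuartic a b).natDegree = 4 := by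
  unfold palindromicQuartic; compute_degree!

theorem coeff_zero_palindromicQuartic [Semiring R] (a b : R) :
    (palindromicQuartic a b).coeff 0 = 1 := by
  simp [palindromicQuartic]

theorem palindromicQuartic_eq_mul [CommRing R] {a b u v : R} (hsum : u + v = -a)
    (hprod : u * v = b - 2) :
    palindromicQuartic a b = (X ^ 2 - C u * X + 1) * (X ^ 2 - C v * X + 1) := by
  rw [show a = -(u + v) by linear_combination hsum, show b = u * v + 2 by linear_combination -hprod]
  simp only [palindromicQuartic, C_neg, C_add, C_mul, map_ofNat]
  ring

variable {K : Type*} [Field K]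

theorem X_sq_sub_C_add_inv_mul_X_add_one {z : K} (hz : z ≠ 0) :
    X ^ 2 - C (z + z⁻¹) * X + 1 = (X - C z) * (X - C z⁻¹) := by
  have h : C z * C z⁻¹ = 1 := by rw [← C_mul, mul_inv_cancel₀ hz, C_1]
  rw [C_add]
  linear_combination -h

theorem exists_eq_add_inv_of_splits {u : K} (h : (X ^ 2 - C u * X + 1).Splits) :
    ∃ z ≠ 0, u = z + z⁻¹ := by
  have hdeg : (X ^ 2 - C u * X + 1 : K[X]).degree ≠ 0 := by
    have h2 : (X ^ 2 - C u * X + 1 : K[X]).degree = 2 := by compute_degree!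
    rw [h2]; decide
  obtain ⟨z, hz⟩ := h.exists_eval_eq_zero hdeg
  simp only [eval_add, eval_sub, eval_pow, eval_mul, eval_C, eval_X, eval_one] at hz
  have hz0 : z ≠ 0 := by rintro rfl; simp at hz
  refine ⟨z, hz0, ?_⟩
  field_simp
  linear_combination -hz

theorem exists_palindromicQuartic_eq_prod_of_splits {a b : K}
    (h : (palindromicQuartic a b).Splits) :
    ∃ y ≠ 0, ∃ z ≠ 0, palindromicQuartic a b =
        (X - C y) * (X - C y⁻¹) * ((X - C z) * (X - C z⁻¹)) ∧
      y + y⁻¹ + (z + z⁻¹) = -a ∧ (y + y⁻¹) * (z + z⁻¹) = b - 2 := by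
  have hdeg : (palindromicQuartic a b).degree ≠ 0 :=
    degree_ne_of_natDegree_ne (by rw [natDegree_palindromicQuartic]; norm_num)
  obtain ⟨x, hx⟩ := h.exists_eval_eq_zero hdeg
  simp only [palindromicQuartic, eval_add, eval_pow, eval_mul, eval_C, eval_X, eval_one] at hx
  have hx0 : x ≠ 0 := by rintro rfl; simp at hx
  -- `x⁻² P(x) = t² + a t + b - 2` for `t = x + x⁻¹`
  have hquad : (x + x⁻¹) * (-a - (x + x⁻¹)) = b - 2 := by
    field_simp
    linear_combination -hx
  have hP := palindromicQuartic_eq_mul (by ring : x + x⁻¹ + (-a - (x + x⁻¹)) = -a) hquad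
  have hne := (monic_palindromicQuartic a b).ne_zero
  obtain ⟨y, hy, hu⟩ := exists_eq_add_inv_of_splits (h.of_dvd hne ⟨_, hP⟩)
  obtain ⟨z, hz, hv⟩ := exists_eq_add_inv_of_splits (h.of_dvd hne ⟨_, hP.trans (mul_comm _ _)⟩)
  refine ⟨y, hy, z, hz, ?_, ?_, ?_⟩
  · rw [hP, hv, hu, X_sq_sub_C_add_inv_mul_X_add_one hy, X_sq_sub_C_add_inv_mul_X_add_one hz]
  · linear_combination -hu - hv
  · rw [← hu, ← hv, hquad]

theorem prod_derivative_eval_roots_palindromicQuartic {a b : K}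
    (h : (palindromicQuartic a b).Splits) :
    ((palindromicQuartic a b).roots.map (derivative (palindromicQuartic a b)).eval).prod =
      (b + 2 - 2 * a) * (b + 2 + 2 * a) * (a ^ 2 - 4 * b + 8) ^ 2 := by
  obtain ⟨y, hy, z, hz, hP, hsum, hprod⟩ := exists_palindromicQuartic_eq_prod_of_splits h
  have hroots : (palindromicQuartic a b).roots = {y, y⁻¹, z, z⁻¹} := by
    rw [hP, ← roots_multiset_prod_X_sub_C ({y, y⁻¹, z, z⁻¹} : Multiset K)]
    simp only [Multiset.insert_eq_cons, Multiset.map_cons, Multiset.prod_cons,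
      Multiset.map_singleton, Multiset.prod_singleton, mul_assoc]
  have hder : ∀ t, (derivative (palindromicQuartic a b)).eval t =
      (t - y⁻¹) * (t - z) * (t - z⁻¹) + (t - y) * (t - z) * (t - z⁻¹) +
        (t - y) * (t - y⁻¹) * (t - z⁻¹) + (t - y) * (t - y⁻¹) * (t - z) := fun t => by
    rw [hP]
    simp only [derivative_mul, derivative_sub, derivative_X, derivative_C, eval_add, eval_mul,
      eval_sub, eval_X, eval_C, eval_one, sub_zero]
    ring
  simp only [hroots, Multiset.insert_eq_cons, Multiset.map_cons, Multiset.prod_cons,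
    Multiset.map_singleton, Multiset.prod_singleton, hder]
  calc _ = ((y + y⁻¹) ^ 2 - 4) * ((z + z⁻¹) ^ 2 - 4) * (y + y⁻¹ - (z + z⁻¹)) ^ 4 := by
        field_simp
        ring
    _ = _ := by
        rw [show a = -(y + y⁻¹ + (z + z⁻¹)) by linear_combination hsum,
          show b = (y + y⁻¹) * (z + z⁻¹) + 2 by linear_combination -hprod]
        ring

theorem prod_roots_palindromicQuartic_comp_X_pow {a b : K} {m : ℕ} (hm : m ≠ 0)
    (h : ((palindromicQuartic a b).comp (X ^ m)).Splits) :
    ((palindromicQuartic a b).comp (X ^ m)).roots.prod = 1 := by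
  have h0 := h.coeff_zero_eq_prod_roots_of_monic
    ((monic_palindromicQuartic a b).comp (monic_X_pow m) (by simpa using hm))
  rwa [coeff_zero_eq_eval_zero, eval_comp, eval_pow, eval_X, zero_pow hm,
    ← coeff_zero_eq_eval_zero, coeff_zero_palindromicQuartic, natDegree_comp, natDegree_X_pow,
    natDegree_palindromicQuartic, Even.neg_one_pow ⟨2 * m, by ring⟩, one_mul, eq_comm] at h0

end PalindromicQuartic

theorem quint_add_two_eq_palindromicQuartic_comp (k : ℕ) (A B : ℤ) :
    Quint (k + 2) A B = (palindromicQuartic A B).comp (X ^ 2 ^ k) := by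
  have h4 : 2 ^ (k + 2) = 2 ^ k * 4 := by ring
  have h3 : 3 * 2 ^ k = 2 ^ k * 3 := mul_comm _ _
  have h2 : 2 ^ (k + 2 - 1) = 2 ^ k * 2 := by rw [show k + 2 - 1 = k + 1 by omega, pow_succ]
  simp only [Quint, palindromicQuartic, add_comp, mul_comp, pow_comp, C_comp, X_comp, one_comp,
    h4, h3, h2, Nat.add_sub_cancel, pow_mul]

theorem quint_disc_general (n : ℕ) (A B : ℤ) (hn : 2 ≤ n) :
    polyDisc ((Quint n A B).map (algebraMap ℤ ℚ)) =
      ((2 ^ (2 ^ n * (n - 2)) *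
        ((B + 2 - 2 * A) * (B + 2 + 2 * A) * (A ^ 2 - 4 * B + 8) ^ 2) ^ (2 ^ (n - 2)) : ℤ) :
        ((Quint n A B).map (algebraMap ℤ ℚ)).SplittingField) := by
  obtain ⟨k, rfl⟩ : ∃ k, n = k + 2 := ⟨n - 2, by omega⟩
  set f := (Quint (k + 2) A B).map (algebraMap ℤ ℚ)
  set P := palindromicQuartic (A : f.SplittingField) (B : f.SplittingField)
  have hF : f.map (algebraMap ℚ f.SplittingField) = P.comp (X ^ 2 ^ k) := by
    simp [f, P, quint_add_two_eq_palindromicQuartic_comp, map_comp, map_palindromicQuartic]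
  have hs : (P.comp (X ^ 2 ^ k)).Splits := hF ▸ SplittingField.splits f
  have hdeg : f.natDegree = 4 * 2 ^ k := by
    rw [← natDegree_map (algebraMap ℚ f.SplittingField), hF, natDegree_comp, natDegree_X_pow,
      natDegree_palindromicQuartic]
  have hsign : (-1 : f.SplittingField) ^ (4 * 2 ^ k * (4 * 2 ^ k - 1) / 2) = 1 := by
    rw [show 4 * 2 ^ k * (4 * 2 ^ k - 1) = 2 * (2 * 2 ^ k * (4 * 2 ^ k - 1)) by ring,
      Nat.mul_div_cancel_left _ two_pos, pow_mul, pow_mul, neg_one_sq, one_pow, one_pow]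
  unfold polyDisc
  rw [hF, hdeg, hsign, prod_derivative_eval_roots_comp_X_pow (by positivity) hs,
    prod_derivative_eval_roots_palindromicQuartic (hs.of_comp_X_pow (by positivity)),
    prod_roots_palindromicQuartic_comp_X_pow (by positivity) hs, natDegree_palindromicQuartic,
    one_pow, mul_one, one_mul, Nat.add_sub_cancel]
  push_cast
  ring

theorem quint_disc (n : ℕ) (A B : ℤ) (hn : 2 ≤ n) (hAB : A * B ≠ 0) :
    polyDisc ((Quint n A B).map (algebraMap ℤ ℚ)) =
      ((2 ^ (2 ^ n * (n - 2)) *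
        ((B + 2 - 2 * A) * (B + 2 + 2 * A) * (A ^ 2 - 4 * B + 8) ^ 2) ^ (2 ^ (n - 2)) : ℤ) :
        ((Quint n A B).map (algebraMap ℤ ℚ)).SplittingField) :=
  quint_disc_general n A B hn
end

section
/- Let G(t) ∈ ℤ[t] be a product of N not-necessarily-distinct monic linear polynomials over ℤ, and let ℓ be a prime. If G(z) ≡ 0 (mod ℓ^2) for every z coprime to ℓ in ℤ/ℓ^2ℤ, then ℓ ≤ (N+2)/2. -/
/-!
Reduce the roots modulo `ℓ`. Every nonzero residue class must contain at least two roots: if it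
contains none, `G` does not even vanish mod `ℓ` at a representative; if it contains exactly one
root `a`, then at `z = a + ℓ` the factor `z - a = ℓ` is the only one divisible by `ℓ`, so
`ℓ² ∤ G(z)`. Hence `N ≥ 2 (ℓ - 1)`.
-/

open Polynomial

theorem Multiset.mul_card_le_card_of_le_count {α : Type*} [DecidableEq α] (m : Multiset α)
    (S : Finset α) {k : ℕ} (h : ∀ a ∈ S, k ≤ m.count a) : k * S.card ≤ Multiset.card m := by
  have hle : k • S.val ≤ m := Multiset.le_iff_count.mpr fun a => by
    rw [Multiset.count_nsmul, Multiset.count_eq_of_nodup S.nodup]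
    split_ifs with ha
    · simpa using h a ha
    · simp
  simpa using Multiset.card_le_card hle

section Residues

variable {ℓ : ℕ} [Fact ℓ.Prime]

theorem dvd_prod_sub_iff_mem_map_intCast (s : Multiset ℤ) (z : ℤ) :
    (ℓ : ℤ) ∣ (s.map (z - ·)).prod ↔ (z : ZMod ℓ) ∈ s.map (Int.cast : ℤ → ZMod ℓ) := by
  rw [← ZMod.intCast_zmod_eq_zero_iff_dvd, Int.cast_multiset_prod, Multiset.prod_eq_zero_iff]
  simp [sub_eq_zero, eq_comm]

theorem two_le_count_map_intCast_of_sq_dvd_prod (s : Multiset ℤ) (r : ZMod ℓ)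
    (h : ∀ z : ℤ, (z : ZMod ℓ) = r → (ℓ : ℤ) ^ 2 ∣ (s.map (z - ·)).prod) :
    2 ≤ (s.map (Int.cast : ℤ → ZMod ℓ)).count r := by
  by_contra! hlt
  have hr : r ∈ s.map (Int.cast : ℤ → ZMod ℓ) := by
    simpa only [dvd_prod_sub_iff_mem_map_intCast, ZMod.intCast_zmod_cast] using
      (dvd_pow_self _ two_ne_zero).trans (h _ (ZMod.intCast_zmod_cast r))
  obtain ⟨a, ha, rfl⟩ := Multiset.mem_map.mp hr
  obtain ⟨t, rfl⟩ := Multiset.exists_cons_of_mem ha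
  have ht : ((a : ℤ) : ZMod ℓ) ∉ t.map (Int.cast : ℤ → ZMod ℓ) := by
    rw [← Multiset.count_eq_zero]
    simp only [Multiset.map_cons, Multiset.count_cons_self] at hlt
    omega
  have hz : ((a + ℓ : ℤ) : ZMod ℓ) = a := by simp
  have hsq := h (a + ℓ) hz
  rw [Multiset.map_cons, Multiset.prod_cons, add_sub_cancel_left, pow_two,
    mul_dvd_mul_iff_left (by exact_mod_cast (Fact.out : ℓ.Prime).ne_zero),
    dvd_prod_sub_iff_mem_map_intCast, hz] at hsq
  exact ht hsq

end Residues

theorem obstruction_bound (G : Polynomial ℤ) (N : ℕ) (l : List ℤ)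
    (hlen : l.length = N) (hG : G = (l.map (fun a => X - C a)).prod)
    (ℓ : ℕ) (hℓ : ℓ.Prime)
    (hobs : ∀ z : ℤ, ¬ (ℓ : ℤ) ∣ z → ((ℓ : ℤ) ^ 2 ∣ G.eval z)) :
    2 * ℓ ≤ N + 2 := by
  have : Fact ℓ.Prime := ⟨hℓ⟩
  have heval : ∀ z : ℤ, G.eval z = ((l : Multiset ℤ).map (z - ·)).prod := fun z => by
    simp [hG, eval_list_prod, Function.comp_def]
  have hcount : ∀ r ∈ Finset.univ.erase (0 : ZMod ℓ),
      2 ≤ ((l : Multiset ℤ).map (Int.cast : ℤ → ZMod ℓ)).count r := fun r hr =>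
    two_le_count_map_intCast_of_sq_dvd_prod _ r fun z hz => by
      rw [← heval]
      refine hobs z fun hdvd => Finset.ne_of_mem_erase hr ?_
      rwa [← hz, ZMod.intCast_zmod_eq_zero_iff_dvd]
  have hbound := Multiset.mul_card_le_card_of_le_count _ _ hcount
  rw [Finset.card_erase_of_mem (Finset.mem_univ _), Finset.card_univ, ZMod.card,
    Multiset.card_map, Multiset.coe_card, hlen] at hbound
  have := hℓ.one_lt
  omega
end

section
/- The only integer solutions of y^2 = (A+9)(A+1)(A^2+6A+25) are those with A ∈ {-1, 0, -9, -11, 4}. -/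
/-!
With `P = A ^ 2 + 8 * A + 15` the quartic is `P ^ 2 + 64 * A`, so `y ≡ P [ZMOD 2]`; for `A ≠ 0`
the squares differ, hence `|y|` and `|P|` differ by at least 2.
For `A > 0` this gives `4 * (A - 4) ^ 2 ≤ 0`; for `A < 0` it gives `A ^ 2 + 24 * A + 14 ≤ 0`,
hence `-23 ≤ A`, and the remaining negative values are checked one by one.
-/

theorem Int.even_sub_of_sq_eq_sq_add {x y c : ℤ} (h : y ^ 2 = x ^ 2 + c) (hc : Even c) :
    Even (y - x) := by
  have : Even (y ^ 2) ↔ Even (x ^ 2) := by rw [h, Int.even_add]; tauto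
  simpa [Int.even_sub, Int.even_pow] using this

theorem Int.abs_add_two_le_abs_of_sq_lt {a b : ℤ} (h : a ^ 2 < b ^ 2) (hpar : Even (b - a)) :
    |a| + 2 ≤ |b| := by
  have hlt : |a| < |b| := sq_lt_sq.mp h
  obtain ⟨k, hk⟩ := hpar
  rcases abs_choice a with ha | ha <;> rcases abs_choice b with hb | hb <;> omega

namespace QuarticIntegralPoints

theorem quartic_eq_sq_add (A : ℤ) :
    (A + 9) * (A + 1) * (A ^ 2 + 6 * A + 25) = (A ^ 2 + 8 * A + 15) ^ 2 + 64 * A := by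
  ring

variable {A y : ℤ}

theorem eq_four_of_pos (hA : 0 < A) (h : y ^ 2 = (A ^ 2 + 8 * A + 15) ^ 2 + 64 * A) :
    A = 4 := by
  have hP : 0 < A ^ 2 + 8 * A + 15 := by positivity
  have hgap := Int.abs_add_two_le_abs_of_sq_lt (by linarith)
    (Int.even_sub_of_sq_eq_sq_add h ⟨32 * A, by ring⟩)
  rw [abs_of_pos hP] at hgap
  have hsq : (A ^ 2 + 8 * A + 15 + 2) ^ 2 ≤ y ^ 2 := by
    rw [← sq_abs y]
    exact pow_le_pow_left₀ (by positivity) hgap 2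
  have hzero : (A - 4) ^ 2 = 0 := le_antisymm (by linarith) (sq_nonneg _)
  exact sub_eq_zero.mp (pow_eq_zero_iff two_ne_zero |>.mp hzero)

theorem neg_twentythree_le_of_neg (hA : A < 0)
    (h : y ^ 2 = (A ^ 2 + 8 * A + 15) ^ 2 + 64 * A) : -23 ≤ A := by
  have hpar : Even (A ^ 2 + 8 * A + 15 - y) :=
    Int.even_sub_of_sq_eq_sq_add (c := -(64 * A)) (by rw [h]; ring) ⟨-32 * A, by ring⟩
  have hgap := Int.abs_add_two_le_abs_of_sq_lt (by linarith) hpar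
  have hsq : y ^ 2 ≤ (|A ^ 2 + 8 * A + 15| - 2) ^ 2 := by
    rw [← sq_abs y]
    exact pow_le_pow_left₀ (abs_nonneg y) (by linarith) 2
  have hexpand : (|A ^ 2 + 8 * A + 15| - 2) ^ 2 = (A ^ 2 + 8 * A + 15) ^ 2
      - 4 * |A ^ 2 + 8 * A + 15| + 4 := by
    rw [sub_sq, sq_abs]; ring
  have hquad : A ^ 2 + 24 * A + 14 ≤ 0 := by
    linarith [le_abs_self (A ^ 2 + 8 * A + 15)]
  nlinarith

theorem eq_of_neg_of_isSquare (hlow : -23 ≤ A) (hA : A < 0)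
    (h : IsSquare ((A + 9) * (A + 1) * (A ^ 2 + 6 * A + 25))) :
    A = -1 ∨ A = -9 ∨ A = -11 := by
  interval_cases A <;> revert h <;> norm_num

end QuarticIntegralPoints

theorem quartic_integral_points :
    (∀ A y : ℤ, y ^ 2 = (A + 9) * (A + 1) * (A ^ 2 + 6 * A + 25) →
      A = -1 ∨ A = 0 ∨ A = -9 ∨ A = -11 ∨ A = 4) ∧
    (∀ A : ℤ, (A = -1 ∨ A = 0 ∨ A = -9 ∨ A = -11 ∨ A = 4) →
      ∃ y : ℤ, y ^ 2 = (A + 9) * (A + 1) * (A ^ 2 + 6 * A + 25)) := by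
  refine ⟨fun A y h ↦ ?_, ?_⟩
  · have hsquare : IsSquare ((A + 9) * (A + 1) * (A ^ 2 + 6 * A + 25)) := ⟨y, by rw [← h, sq]⟩
    rw [QuarticIntegralPoints.quartic_eq_sq_add] at h
    rcases lt_trichotomy A 0 with hA | rfl | hA
    · have := QuarticIntegralPoints.eq_of_neg_of_isSquare
        (QuarticIntegralPoints.neg_twentythree_le_of_neg hA h) hA hsquare
      tauto
    · simp
    · simp [QuarticIntegralPoints.eq_four_of_pos hA h]
  · rintro A (rfl | rfl | rfl | rfl | rfl)
    exacts [⟨0, by norm_num⟩, ⟨15, by norm_num⟩, ⟨0, by norm_num⟩, ⟨40, by norm_num⟩,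
      ⟨65, by norm_num⟩]
end

section
/- Let P, Q, R be pairwise coprime positive odd squarefree integers satisfying P^2Q^2 - 2PQ^2R + Q^2R^2 + 32PQ - 16PR + 32QR + 256 = 0. Then no such triple exists. -/
/-!
The equation says both `(Q(P + R) + 16)² = 4PR(Q² + 4)` and
`16PR = Q²(P - R)² + 32x - 256` with `x = Q(P + R) + 16 > 16`, so `PR > x`.
But the squarefree number `PR` divides `x²`, hence divides `x`, so `PR ≤ x`.
-/

theorem Squarefree.le_of_sq_eq_mul {n x c : ℤ} (hn : Squarefree n) (hx : 0 < x)
    (h : x ^ 2 = n * c) : n ≤ x :=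
  Int.le_of_dvd hx ((hn.dvd_pow_iff_dvd two_ne_zero).mp ⟨c, h⟩)

theorem no_PQR_triple :
    ¬ ∃ P Q R : ℤ, 0 < P ∧ 0 < Q ∧ 0 < R ∧ Odd P ∧ Odd Q ∧ Odd R ∧
      Squarefree P ∧ Squarefree Q ∧ Squarefree R ∧
      IsCoprime P Q ∧ IsCoprime Q R ∧ IsCoprime P R ∧
      P ^ 2 * Q ^ 2 - 2 * P * Q ^ 2 * R + Q ^ 2 * R ^ 2 + 32 * P * Q - 16 * P * R +
        32 * Q * R + 256 = 0 := by
  rintro ⟨P, Q, R, hP, hQ, hR, -, -, -, hsP, -, hsR, -, -, hPR, heq⟩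
  have hsq : Squarefree (P * R) := squarefree_mul_iff.mpr ⟨hPR.isRelPrime, hsP, hsR⟩
  have hx : 16 < Q * (P + R) + 16 := by nlinarith
  have hle : P * R ≤ Q * (P + R) + 16 :=
    hsq.le_of_sq_eq_mul (c := 4 * (Q ^ 2 + 4)) (by linarith) (by linear_combination heq)
  nlinarith [sq_nonneg (Q * (P - R))]
end

section
/- Let n ≥ 3 and suppose F_{n,A,B}(x) is monogenic, i.e., it is irreducible over ℚ and for a root θ, ℤ[θ] is the full ring of integers of ℚ(θ). Then F_{n-1,A,B}(x) is monogenic. -/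
open Polynomial IntermediateField

/-- A monic integer polynomial is monogenic if it is irreducible over `ℚ` and for every
root `θ` of it in a field extension of `ℚ`, `ℤ[θ]` is the integral closure of `ℤ` in
`ℚ(θ)`; here we work inside `K = ℚ(θ)` itself, so the condition reads
`Algebra.adjoin ℤ {θ} = integralClosure ℤ K`. -/
def Monogenic (f : Polynomial ℤ) : Prop :=
  Irreducible (f.map (algebraMap ℤ ℚ)) ∧
    ∀ (K : Type) (_ : Field K) (_ : Algebra ℚ K) (θ : K),
      aeval θ (f.map (algebraMap ℤ ℚ)) = 0 → (⊤ : IntermediateField ℚ K) = ℚ⟮θ⟯ →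
        Algebra.adjoin ℤ {θ} = integralClosure ℤ K

/-!
Since `F_{n,A,B}(x) = F_{n-1,A,B}(x²)`, a square root of a root `θ` of `F_{n-1,A,B}` is a root of
the irreducible `F_{n,A,B}`, whose degree is twice `[ℚ(θ) : ℚ]`; so `θ` is not a square in
`K = ℚ(θ)`, and `L = K(φ)` with `φ² = θ` is a quadratic extension with `L = ℚ(φ)`. By
monogenicity of `F_{n,A,B}`, an algebraic integer `x ∈ K` lies in `ℤ[φ] = ℤ[θ] + φ ℤ[θ]`, and
since `φ ∉ K` its `φ`-component vanishes, so `x ∈ ℤ[θ]`.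
-/

theorem Algebra.exists_eq_add_mul_of_mem_adjoin_singleton {R S : Type*} [CommSemiring R]
    [CommSemiring S] [Algebra R S] {φ x : S} (hx : x ∈ adjoin R {φ}) :
    ∃ a ∈ adjoin R {φ ^ 2}, ∃ b ∈ adjoin R {φ ^ 2}, x = a + φ * b := by
  induction hx using adjoin_induction with
  | mem y hy =>
    rw [Set.mem_singleton_iff.mp hy]
    exact ⟨0, zero_mem _, 1, one_mem _, by ring⟩
  | algebraMap r => exact ⟨algebraMap R S r, algebraMap_mem _ r, 0, zero_mem _, by ring⟩
  | add x y _ _ hx hy =>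
    obtain ⟨a, ha, b, hb, rfl⟩ := hx
    obtain ⟨c, hc, d, hd, rfl⟩ := hy
    exact ⟨a + c, add_mem ha hc, b + d, add_mem hb hd, by ring⟩
  | mul x y _ _ hx hy =>
    obtain ⟨a, ha, b, hb, rfl⟩ := hx
    obtain ⟨c, hc, d, hd, rfl⟩ := hy
    have hsq : φ ^ 2 ∈ adjoin R {φ ^ 2} := subset_adjoin rfl
    exact ⟨a * c + φ ^ 2 * (b * d), add_mem (mul_mem ha hc) (mul_mem hsq (mul_mem hb hd)),
      a * d + b * c, add_mem (mul_mem ha hd) (mul_mem hb hc), by ring⟩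

theorem Algebra.adjoin_singleton_eq_top_of_sq_eq {F K L : Type*} [CommSemiring F]
    [CommSemiring K] [CommSemiring L] [Algebra F K] [Algebra F L] [Algebra K L]
    [IsScalarTower F K L] {θ : K} (hθ : adjoin F {θ} = ⊤) {φ : L}
    (hφ : φ ^ 2 = algebraMap K L θ) (hφK : adjoin K {φ} = ⊤) : adjoin F {φ} = ⊤ := by
  have h := adjoin_eq_adjoin_union F {θ} {φ} hθ
  rw [hφK, Set.image_singleton, ← hφ, Subalgebra.restrictScalars_top] at h
  rw [h, Set.singleton_union]
  have hφmem : φ ∈ adjoin F {φ} := subset_adjoin (Set.mem_singleton φ)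
  exact le_antisymm (adjoin_mono (Set.subset_insert _ _))
    (adjoin_le (Set.insert_subset (pow_mem hφmem 2) subset_adjoin))

theorem mem_adjoin_of_algebraMap_mem_adjoin_sqrt {R K L : Type*} [CommRing R] [Field K]
    [CommRing L] [Nontrivial L] [Algebra R K] [Algebra R L] [Algebra K L] [IsScalarTower R K L]
    {θ : K} (hθ : ∀ c : K, c ^ 2 ≠ θ) {φ : L} (hφ : φ ^ 2 = algebraMap K L θ) {x : K}
    (hx : algebraMap K L x ∈ Algebra.adjoin R {φ}) : x ∈ Algebra.adjoin R {θ} := by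
  obtain ⟨a, ha, b, hb, hxab⟩ := Algebra.exists_eq_add_mul_of_mem_adjoin_singleton hx
  rw [hφ, ← IsScalarTower.coe_toAlgHom' R K L, ← AlgHom.map_adjoin_singleton] at ha hb
  obtain ⟨a, ha, rfl⟩ := ha
  obtain ⟨b, -, rfl⟩ := hb
  change algebraMap K L x = algebraMap K L a + φ * algebraMap K L b at hxab
  obtain rfl | hb0 := eq_or_ne b 0
  · rw [map_zero, mul_zero, add_zero] at hxab
    rwa [(algebraMap K L).injective hxab]
  · refine absurd ?_ (hθ ((x - a) / b))
    apply (algebraMap K L).injective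
    have hφK : φ = algebraMap K L ((x - a) / b) := by
      rw [div_eq_mul_inv, map_mul, map_sub, hxab, add_sub_cancel_left, mul_assoc, ← map_mul,
        mul_inv_cancel₀ hb0, map_one, mul_one]
    rw [map_pow, ← hφK, hφ]

theorem sq_ne_of_irreducible_expand_two {F K : Type*} [Field F] [Field K] [Algebra F K]
    {q : F[X]} (hirr : Irreducible (expand F 2 q)) {θ : K} (hθ : aeval θ q = 0)
    (htop : (⊤ : IntermediateField F K) = F⟮θ⟯) (c : K) : c ^ 2 ≠ θ := by
  rintro rfl
  have hc : aeval c (expand F 2 q) = 0 := by rw [expand_aeval, hθ]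
  have hcint : IsIntegral F c := IsAlgebraic.isIntegral ⟨_, hirr.ne_zero, hc⟩
  have hdeg_c : (minpoly F c).natDegree = q.natDegree * 2 := by
    rw [← minpoly.eq_of_irreducible hirr hc, natDegree_mul_C (by simpa using hirr.ne_zero),
      natDegree_expand]
  have hq0 : q ≠ 0 := (of_irreducible_expand two_ne_zero hirr).ne_zero
  have hdeg_θ : (minpoly F (c ^ 2)).natDegree ≤ q.natDegree :=
    natDegree_le_natDegree (minpoly.degree_le_of_ne_zero F (c ^ 2) hq0 hθ)
  have hadj : F⟮c⟯ = F⟮c ^ 2⟯ :=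
    le_antisymm (htop ▸ le_top) (adjoin_simple_le_iff.2 (pow_mem (mem_adjoin_simple_self F c) 2))
  have hfinrank := congrArg (fun E : IntermediateField F K => Module.finrank F E) hadj
  simp only [adjoin.finrank hcint, adjoin.finrank (hcint.pow 2)] at hfinrank
  have hpos := hirr.natDegree_pos
  rw [natDegree_expand] at hpos
  omega

theorem Monogenic.of_expand_two {g : ℤ[X]} (h : Monogenic (expand ℤ 2 g)) : Monogenic g := by
  set q := g.map (algebraMap ℤ ℚ)
  obtain ⟨hirr, hint⟩ := h
  rw [map_expand] at hirr hint
  have hqirr : Irreducible q := of_irreducible_expand two_ne_zero hirr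
  refine ⟨hqirr, fun K _ _ θ hθ htop => ?_⟩
  have hθ_not_sq := sq_ne_of_irreducible_expand_two hirr hθ htop
  have := Fact.mk (X_pow_sub_C_irreducible_of_prime Nat.prime_two hθ_not_sq)
  let L := AdjoinRoot (X ^ 2 - C θ)
  let φ : L := AdjoinRoot.root _
  have hφ : φ ^ 2 = algebraMap K L θ := by
    have h := AdjoinRoot.eval₂_root (X ^ 2 - C θ)
    rwa [eval₂_sub, eval₂_X_pow, eval₂_C, sub_eq_zero] at h
  have hφroot : aeval φ (expand ℚ 2 q) = 0 := by
    rw [expand_aeval, hφ, aeval_algebraMap_apply, hθ, map_zero]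
  have hθadj : Algebra.adjoin ℚ {θ} = ⊤ := by
    rw [← adjoin_simple_toSubalgebra_of_isAlgebraic ⟨q, hqirr.ne_zero, hθ⟩, ← htop,
      top_toSubalgebra]
  have hφadj : (⊤ : IntermediateField ℚ L) = ℚ⟮φ⟯ := by
    refine (eq_top_iff.2 fun x _ => algebra_adjoin_le_adjoin ℚ {φ} ?_).symm
    rw [Algebra.adjoin_singleton_eq_top_of_sq_eq hθadj hφ AdjoinRoot.adjoinRoot_eq_top]
    trivial
  have hL : Algebra.adjoin ℤ {φ} = integralClosure ℤ L := hint L _ _ φ hφroot hφadj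
  refine le_antisymm (Algebra.adjoin_le (Set.singleton_subset_iff.2 ?_)) fun x hx => ?_
  · have hφint : IsIntegral ℤ φ := by
      rw [← mem_integralClosure_iff, ← hL]
      exact Algebra.self_mem_adjoin_singleton ℤ φ
    refine (isIntegral_algHom_iff (IsScalarTower.toAlgHom ℤ K L) (algebraMap K L).injective).1 ?_
    rw [IsScalarTower.coe_toAlgHom', ← hφ]
    exact hφint.pow 2
  · refine mem_adjoin_of_algebraMap_mem_adjoin_sqrt hθ_not_sq hφ ?_
    rw [hL]
    exact (hx : IsIntegral ℤ x).map (IsScalarTower.toAlgHom ℤ K L)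

theorem quint_eq_expand {n : ℕ} (hn : 3 ≤ n) (A B : ℤ) :
    Quint n A B = expand ℤ 2 (Quint (n - 1) A B) := by
  obtain ⟨k, rfl⟩ : ∃ k, n = k + 3 := ⟨n - 3, by omega⟩
  simp only [Quint, show k + 3 - 1 = k + 2 from rfl, show k + 3 - 2 = k + 1 from rfl,
    show k + 2 - 1 = k + 1 from rfl, show k + 2 - 2 = k from rfl, map_add, map_mul, map_pow,
    expand_C, expand_X, map_one, ← pow_mul]
  ring

theorem monogenic_descent_general (n : ℕ) (hn : 3 ≤ n) (A B : ℤ)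
    (h : Monogenic (Quint n A B)) : Monogenic (Quint (n - 1) A B) := by
  rw [quint_eq_expand hn] at h
  exact h.of_expand_two

theorem monogenic_descent (n : ℕ) (hn : 3 ≤ n) (A B : ℤ) (hAB : A * B ≠ 0)
    (h : Monogenic (Quint n A B)) : Monogenic (Quint (n - 1) A B) :=
  monogenic_descent_general n hn A B h
end
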